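/- Fix thresholds τ₁ < τ₂ and define the two-anchor map Γ(r, g) = (Φ((r - τ₁)·e^{-g}), Φ((r - τ₂)·e^{-g})) from ℝ² to (0,1)². Then the Jacobian determinant of Γ at (r, g) equals φ(z₁)·φ(z₂)·e^{-2g}·(τ₂ - τ₁), where z_k = (r - τ_k)·e^{-g} and φ is the standard normal density. In particular, the Jacobian determinant is strictly positive everywhere. -/

import Mathlib

noncomputable def stdGaussianPDF (t : ℝ) : ℝ :=
  (Real.sqrt (2 * Real.pi))⁻¹ * Real.exp (-t ^ 2 / 2)

noncomputable def stdGaussianCDF (x : ℝ) : ℝ :=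
  ∫ t in Set.Iic x, stdGaussianPDF t

/-- The two-anchor map `Γ(r,g) = (Φ((r-τ₁)e^{-g}), Φ((r-τ₂)e^{-g}))`. -/
noncomputable def twoAnchorMap (τ₁ τ₂ : ℝ) (p : ℝ × ℝ) : ℝ × ℝ :=
  (stdGaussianCDF ((p.1 - τ₁) * Real.exp (-p.2)),
   stdGaussianCDF ((p.1 - τ₂) * Real.exp (-p.2)))

/-! Each coordinate of `Γ` is `Φ ∘ z_k` with `∂z_k/∂r = e^{-g}` and `∂z_k/∂g = -z_k`, so the
Jacobian determinant is `φ(z₁) φ(z₂) (e^{-g} (-z₂) + z₁ e^{-g}) = φ(z₁) φ(z₂) e^{-2g} (τ₂ - τ₁)`,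
positive since `φ > 0` and `τ₁ < τ₂`. -/

open ContinuousLinearMap MeasureTheory

lemma stdGaussianPDF_pos (t : ℝ) : 0 < stdGaussianPDF t := by
  unfold stdGaussianPDF
  positivity

lemma continuous_stdGaussianPDF : Continuous stdGaussianPDF := by
  unfold stdGaussianPDF
  fun_prop

lemma integrable_stdGaussianPDF : Integrable stdGaussianPDF := by
  refine ((integrable_exp_neg_mul_sq (b := (1 / 2 : ℝ)) (by norm_num)).const_mul
    (Real.sqrt (2 * Real.pi))⁻¹).congr (Filter.Eventually.of_forall fun t => ?_)
  simp only [stdGaussianPDF]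
  ring_nf

lemma stdGaussianCDF_eq_add_intervalIntegral (x : ℝ) :
    stdGaussianCDF x = stdGaussianCDF 0 + ∫ t in (0 : ℝ)..x, stdGaussianPDF t := by
  have h := intervalIntegral.integral_Iic_sub_Iic (a := 0) (b := x)
    integrable_stdGaussianPDF.integrableOn integrable_stdGaussianPDF.integrableOn
  rw [stdGaussianCDF, stdGaussianCDF, ← h]
  ring

lemma hasDerivAt_stdGaussianCDF (x : ℝ) : HasDerivAt stdGaussianCDF (stdGaussianPDF x) x := by
  have hFTC := intervalIntegral.integral_hasDerivAt_right
    (continuous_stdGaussianPDF.intervalIntegrable 0 x)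
    continuous_stdGaussianPDF.stronglyMeasurable.stronglyMeasurableAtFilter
    continuous_stdGaussianPDF.continuousAt
  rw [funext stdGaussianCDF_eq_add_intervalIntegral]
  exact hFTC.const_add _

lemma det_prod_eq_mul_sub_mul {R : Type*} [CommRing R] [TopologicalSpace R] [IsTopologicalRing R]
    (φ ψ : R × R →L[R] R) :
    (φ.prod ψ).det = φ (1, 0) * ψ (0, 1) - φ (0, 1) * ψ (1, 0) := by
  rw [ContinuousLinearMap.det, ← LinearMap.det_toMatrix (Module.Basis.finTwoProd R),
    Matrix.det_fin_two]
  simp [LinearMap.toMatrix_apply]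

lemma hasFDerivAt_stdGaussianCDF_anchor (τ r g : ℝ) :
    let z := (r - τ) * Real.exp (-g)
    HasFDerivAt (fun p : ℝ × ℝ => stdGaussianCDF ((p.1 - τ) * Real.exp (-p.2)))
      (stdGaussianPDF z • (Real.exp (-g) • fst ℝ ℝ ℝ - z • snd ℝ ℝ ℝ)) (r, g) := by
  intro z
  have hshift : HasFDerivAt (fun p : ℝ × ℝ => p.1 - τ) (fst ℝ ℝ ℝ) (r, g) :=
    hasFDerivAt_fst.sub_const τ
  have hneg : HasFDerivAt (fun p : ℝ × ℝ => -p.2) (-snd ℝ ℝ ℝ) (r, g) := hasFDerivAt_snd.neg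
  have hscale : HasFDerivAt (fun p : ℝ × ℝ => Real.exp (-p.2))
      (Real.exp (-g) • -snd ℝ ℝ ℝ) (r, g) := hneg.exp
  refine ((hasDerivAt_stdGaussianCDF z).comp_hasFDerivAt (r, g) (hshift.mul hscale)).congr_fderiv ?_
  ext <;> simp [z]

theorem two_anchor_jacobian_det (τ₁ τ₂ : ℝ) (hτ : τ₁ < τ₂) (r g : ℝ) :
    (fderiv ℝ (twoAnchorMap τ₁ τ₂) (r, g)).det
      = stdGaussianPDF ((r - τ₁) * Real.exp (-g)) * stdGaussianPDF ((r - τ₂) * Real.exp (-g))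
          * Real.exp (-(2 * g)) * (τ₂ - τ₁) ∧
    0 < (fderiv ℝ (twoAnchorMap τ₁ τ₂) (r, g)).det := by
  have hΓ : HasFDerivAt (twoAnchorMap τ₁ τ₂) _ (r, g) :=
    (hasFDerivAt_stdGaussianCDF_anchor τ₁ r g).prodMk (hasFDerivAt_stdGaussianCDF_anchor τ₂ r g)
  have hdet : (fderiv ℝ (twoAnchorMap τ₁ τ₂) (r, g)).det
      = stdGaussianPDF ((r - τ₁) * Real.exp (-g)) * stdGaussianPDF ((r - τ₂) * Real.exp (-g))
          * Real.exp (-(2 * g)) * (τ₂ - τ₁) := by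
    rw [hΓ.fderiv, det_prod_eq_mul_sub_mul, show -(2 * g) = -g + -g by ring, Real.exp_add]
    simp only [smul_apply, sub_apply, coe_fst', coe_snd', smul_eq_mul, mul_one, mul_zero,
      sub_zero, zero_sub, mul_neg, neg_mul, sub_neg_eq_add]
    ring
  refine ⟨hdet, hdet ▸ ?_⟩
  have hφ₁ := stdGaussianPDF_pos ((r - τ₁) * Real.exp (-g))
  have hφ₂ := stdGaussianPDF_pos ((r - τ₂) * Real.exp (-g))
  have hgap : 0 < τ₂ - τ₁ := sub_pos.mpr hτ
  positivity
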